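/- The formal power series S(x) = Σ_{n≥0} s(n)·x^n over ℤ, where s(n) = a(n) − b(n) is the difference of even and odd Motzkin path counts, satisfies the functional equation S(x) = 1 + x·S(x) − x²·S(x)². -/

import Mathlib

inductive MStep where
  | U : MStep
  | D : MStep
  | H : MStep
deriving DecidableEq

/-- A word in {U,D,H} is a Motzkin path if #U = #D and no prefix has more D's than U's. -/
def IsMotzkin (w : List MStep) : Prop :=
  w.count MStep.U = w.count MStep.D ∧
  ∀ p : List MStep, p <+: w → p.count MStep.D ≤ p.count MStep.U

/-- Number of Motzkin paths of length n (the n-th Motzkin number). -/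
noncomputable def motzkinNum (n : ℕ) : ℕ :=
  Nat.card {w : List MStep // w.length = n ∧ IsMotzkin w}

/-- Number of Motzkin paths of length n with an even number of U steps. -/
noncomputable def evenMotzkin (n : ℕ) : ℕ :=
  Nat.card {w : List MStep // w.length = n ∧ IsMotzkin w ∧ Even (w.count MStep.U)}

/-- Number of Motzkin paths of length n with an odd number of U steps. -/
noncomputable def oddMotzkin (n : ℕ) : ℕ :=
  Nat.card {w : List MStep // w.length = n ∧ IsMotzkin w ∧ Odd (w.count MStep.U)}

/-- The shadow of the n-th Motzkin number: s(n) = a(n) - b(n). -/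
noncomputable def shadow (n : ℕ) : ℤ :=
  (evenMotzkin n : ℤ) - (oddMotzkin n : ℤ)

/-!
Every nonempty Motzkin path is uniquely `H w` or `U w₁ D w₂` with `w, w₁, w₂` Motzkin paths
(split `U w₁ D w₂` at the first return to height zero). The sign `(-1) ^ #U` is multiplicative
and the extra `U` step flips it, so the signed counts satisfy
`s (n + 2) = s (n + 1) - ∑_{i + j = n} s i * s j`, with `s 0 = s 1 = 1`. These are exactly the
coefficients of `S = 1 + X S - X² S²`.
-/

open scoped Finset
open Finset.HasAntidiagonal

theorem List.prefix_append_iff {α : Type*} {r a b : List α} :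
    r <+: a ++ b ↔ r <+: a ∨ ∃ s, s <+: b ∧ r = a ++ s := by
  refine ⟨fun h => ?_, ?_⟩
  · rcases le_or_gt r.length a.length with hle | hlt
    · exact .inl (List.prefix_of_prefix_length_le h (a.prefix_append b) hle)
    · refine .inr ⟨b.take (r.length - a.length), List.take_prefix _ _, ?_⟩
      calc r = (a ++ b).take r.length := List.prefix_iff_eq_take.1 h
        _ = a ++ b.take (r.length - a.length) := by
          rw [List.take_append, List.take_of_length_le hlt.le]
  · rintro (h | ⟨s, hs, rfl⟩)
    · exact h.trans (a.prefix_append b)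
    · exact (List.prefix_append_right_inj a).2 hs

instance : Fintype MStep :=
  ⟨{MStep.U, MStep.D, MStep.H}, fun x => by cases x <;> simp⟩

lemma isMotzkin_nil : IsMotzkin [] :=
  ⟨rfl, fun p hp => by simp [List.prefix_nil.1 hp]⟩

lemma isMotzkin_H_cons_iff {w : List MStep} : IsMotzkin (MStep.H :: w) ↔ IsMotzkin w := by
  refine and_congr (by simp) ⟨fun h p hp => ?_, fun h p hp => ?_⟩
  · simpa using h (MStep.H :: p) (List.cons_prefix_cons.2 ⟨rfl, hp⟩)
  · rcases List.prefix_cons_iff.1 hp with rfl | ⟨q, rfl, hq⟩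
    · simp
    · simpa using h q hq

lemma not_isMotzkin_D_cons (w : List MStep) : ¬ IsMotzkin (MStep.D :: w) := fun h => by
  simpa using h.2 [MStep.D] (List.cons_prefix_cons.2 ⟨rfl, List.nil_prefix⟩)

lemma isMotzkin_U_append_D_iff {w₁ w₂ : List MStep} (h₁ : IsMotzkin w₁) :
    IsMotzkin (MStep.U :: (w₁ ++ MStep.D :: w₂)) ↔ IsMotzkin w₂ := by
  obtain ⟨hc₁, hp₁⟩ := h₁
  constructor
  · rintro ⟨hc, hp⟩
    refine ⟨by grind, fun q hq => ?_⟩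
    have := hp (MStep.U :: (w₁ ++ MStep.D :: q)) (by simpa using hq)
    grind
  · rintro ⟨hc₂, hp₂⟩
    refine ⟨by grind, fun p hp => ?_⟩
    rcases List.prefix_cons_iff.1 hp with rfl | ⟨t, rfl, ht⟩
    · simp
    rcases List.prefix_append_iff.1 ht with ht | ⟨s, hs, rfl⟩
    · have := hp₁ t ht
      grind
    rcases List.prefix_cons_iff.1 hs with rfl | ⟨q, rfl, hq⟩
    · grind
    · have := hp₂ q hq
      grind

/-- The shortest prefix with more `D`s than `U`s has the form `w₁ ++ [D]`. -/
lemma exists_isMotzkin_append_D {t : List MStep}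
    (h : ∃ q, q <+: t ∧ q.count MStep.U < q.count MStep.D) :
    ∃ w₁ w₂, IsMotzkin w₁ ∧ t = w₁ ++ MStep.D :: w₂ := by
  induction t using List.reverseRecOn with
  | nil =>
    obtain ⟨q, hq, hlt⟩ := h
    simp [List.prefix_nil.1 hq] at hlt
  | append_singleton s x ih =>
    by_cases hs : ∃ q, q <+: s ∧ q.count MStep.U < q.count MStep.D
    · obtain ⟨w₁, w₂, hw₁, rfl⟩ := ih hs
      exact ⟨w₁, w₂ ++ [x], hw₁, by simp⟩
    push Not at hs
    obtain ⟨q, hq, hlt⟩ := h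
    rcases List.prefix_concat_iff.1 hq with rfl | hq
    · have hbal := hs s List.prefix_rfl
      obtain rfl : x = MStep.D := by cases x <;> grind
      exact ⟨s, [], ⟨by grind, hs⟩, rfl⟩
    · exact absurd hlt (hs q hq).not_gt

lemma isMotzkin_U_cons_iff {t : List MStep} :
    IsMotzkin (MStep.U :: t) ↔
      ∃ w₁ w₂, IsMotzkin w₁ ∧ IsMotzkin w₂ ∧ t = w₁ ++ MStep.D :: w₂ := by
  constructor
  · intro h
    have hc := h.1
    obtain ⟨w₁, w₂, h₁, rfl⟩ := exists_isMotzkin_append_D ⟨t, List.prefix_rfl, by grind⟩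
    exact ⟨w₁, w₂, h₁, (isMotzkin_U_append_D_iff h₁).1 h, rfl⟩
  · rintro ⟨w₁, w₂, h₁, h₂, rfl⟩
    exact (isMotzkin_U_append_D_iff h₁).2 h₂

lemma length_le_of_isMotzkin_append_D_eq {a a' b b' : List MStep} (ha : IsMotzkin a)
    (ha' : IsMotzkin a') (h : a ++ MStep.D :: b = a' ++ MStep.D :: b') :
    a'.length ≤ a.length := by
  by_contra! hlt
  have hpre : a ++ [MStep.D] <+: a' := by
    refine List.prefix_of_prefix_length_le (l₃ := a' ++ MStep.D :: b') ?_ (a'.prefix_append _)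
      (by simpa)
    exact h ▸ ⟨b, by simp⟩
  have := ha'.2 _ hpre
  have := ha.1
  grind

lemma eq_of_isMotzkin_append_D_eq {a a' b b' : List MStep} (ha : IsMotzkin a)
    (ha' : IsMotzkin a') (h : a ++ MStep.D :: b = a' ++ MStep.D :: b') : a = a' ∧ b = b' := by
  have hlen := le_antisymm (length_le_of_isMotzkin_append_D_eq ha' ha h.symm)
    (length_le_of_isMotzkin_append_D_eq ha ha' h)
  obtain ⟨rfl, hb⟩ := List.append_inj h hlen
  exact ⟨rfl, List.cons_injective hb⟩

noncomputable def motzkinPaths (n : ℕ) : Finset (List MStep) :=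
  ((List.finite_length_eq MStep n).subset fun _ hw => hw.1 :
    {w : List MStep | w.length = n ∧ IsMotzkin w}.Finite).toFinset

@[simp] lemma mem_motzkinPaths {n : ℕ} {w : List MStep} :
    w ∈ motzkinPaths n ↔ w.length = n ∧ IsMotzkin w :=
  Set.Finite.mem_toFinset _

lemma card_filter_motzkinPaths (n : ℕ) (p : List MStep → Prop) [DecidablePred p] :
    #{w ∈ motzkinPaths n | p w} =
      Nat.card {w : List MStep // w.length = n ∧ IsMotzkin w ∧ p w} := by
  rw [← Nat.card_eq_finsetCard]
  exact Nat.card_congr (Equiv.subtypeEquivRight fun w => by simp [and_assoc])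

noncomputable def motzkinPairs (n : ℕ) : Finset ((_ : ℕ × ℕ) × List MStep × List MStep) :=
  (antidiagonal n).sigma fun ij => motzkinPaths ij.1 ×ˢ motzkinPaths ij.2

def upDown (x : (_ : ℕ × ℕ) × List MStep × List MStep) : List MStep :=
  MStep.U :: (x.2.1 ++ MStep.D :: x.2.2)

lemma count_U_upDown (x : (_ : ℕ × ℕ) × List MStep × List MStep) :
    (upDown x).count MStep.U = x.2.1.count MStep.U + x.2.2.count MStep.U + 1 := by
  simp [upDown]

lemma motzkinPaths_add_two (n : ℕ) :
    motzkinPaths (n + 2) =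
      (motzkinPaths (n + 1)).image (MStep.H :: ·) ∪ (motzkinPairs n).image upDown := by
  ext w
  simp only [motzkinPairs, upDown, Finset.mem_union, Finset.mem_image, Finset.mem_sigma,
    Finset.mem_product, mem_antidiagonal, mem_motzkinPaths]
  constructor
  · rintro ⟨hlen, hw⟩
    match w, hw with
    | MStep.H :: t, hw => exact .inl ⟨t, ⟨by simpa using hlen, isMotzkin_H_cons_iff.1 hw⟩, rfl⟩
    | MStep.U :: t, hw =>
      obtain ⟨w₁, w₂, h₁, h₂, rfl⟩ := isMotzkin_U_cons_iff.1 hw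
      refine .inr ⟨⟨(w₁.length, w₂.length), (w₁, w₂)⟩, ⟨?_, ⟨rfl, h₁⟩, rfl, h₂⟩, rfl⟩
      simp only [List.length_cons, List.length_append] at hlen
      dsimp only
      omega
    | MStep.D :: t, hw => exact absurd hw (not_isMotzkin_D_cons t)
  · rintro (⟨t, ⟨hlen, ht⟩, rfl⟩ | ⟨⟨ij, w₁, w₂⟩, ⟨hij, ⟨hi, h₁⟩, hj, h₂⟩, rfl⟩)
    · exact ⟨by simp [hlen], isMotzkin_H_cons_iff.2 ht⟩
    · refine ⟨?_, isMotzkin_U_cons_iff.2 ⟨w₁, w₂, h₁, h₂, rfl⟩⟩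
      simp only at hij hi hj
      simp only [List.length_cons, List.length_append]
      omega

lemma disjoint_image_H_cons_image_upDown (s : Finset (List MStep)) (n : ℕ) :
    Disjoint (s.image (MStep.H :: ·)) ((motzkinPairs n).image upDown) := by
  simp only [Finset.disjoint_left, Finset.mem_image, not_exists, not_and]
  rintro _ ⟨t, -, rfl⟩ x -
  simp [upDown]

lemma injOn_upDown (n : ℕ) : Set.InjOn upDown (motzkinPairs n) := by
  rintro ⟨⟨i, j⟩, a, b⟩ hx ⟨⟨i', j'⟩, a', b'⟩ hy h
  simp only [motzkinPairs, Finset.coe_sigma, Set.mem_sigma_iff, Finset.mem_coe,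
    Finset.mem_product, mem_motzkinPaths] at hx hy
  obtain ⟨rfl, rfl⟩ := eq_of_isMotzkin_append_D_eq hx.2.1.2 hy.2.1.2 (List.cons_injective h)
  obtain ⟨-, ⟨rfl, -⟩, rfl, -⟩ := hx
  obtain ⟨-, ⟨hi, -⟩, hj, -⟩ := hy
  rw [hi, hj]

noncomputable def signedMotzkin (n : ℕ) : ℤ := ∑ w ∈ motzkinPaths n, (-1) ^ w.count MStep.U

lemma shadow_eq_signedMotzkin (n : ℕ) : shadow n = signedMotzkin n := by
  simp only [shadow, evenMotzkin, oddMotzkin, signedMotzkin, ← card_filter_motzkinPaths,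
    neg_one_pow_eq_ite, Finset.sum_ite, Finset.sum_const, Nat.not_even_iff_odd, nsmul_eq_mul,
    mul_one, mul_neg]
  ring

lemma signedMotzkin_zero : signedMotzkin 0 = 1 := by
  have : motzkinPaths 0 = {[]} := by
    ext w
    simp +contextual [List.length_eq_zero_iff, isMotzkin_nil]
  simp [signedMotzkin, this]

lemma signedMotzkin_one : signedMotzkin 1 = 1 := by
  have : motzkinPaths 1 = {[MStep.H]} := by
    ext w
    simp only [mem_motzkinPaths, List.length_eq_one_iff, Finset.mem_singleton]
    constructor
    · rintro ⟨⟨x, rfl⟩, hx⟩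
      cases x <;> simp_all [IsMotzkin]
    · rintro rfl
      exact ⟨⟨_, rfl⟩, isMotzkin_H_cons_iff.2 isMotzkin_nil⟩
  simp [signedMotzkin, this]

lemma signedMotzkin_add_two (n : ℕ) :
    signedMotzkin (n + 2) = signedMotzkin (n + 1) -
      ∑ ij ∈ antidiagonal n, signedMotzkin ij.1 * signedMotzkin ij.2 := by
  rw [signedMotzkin, motzkinPaths_add_two,
    Finset.sum_union (disjoint_image_H_cons_image_upDown _ n),
    Finset.sum_image List.cons_injective.injOn, Finset.sum_image (injOn_upDown n),
    motzkinPairs, Finset.sum_sigma]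
  simp only [count_U_upDown, List.count_cons_of_ne (by decide : MStep.H ≠ MStep.U), pow_succ,
    pow_add, mul_neg_one, Finset.sum_neg_distrib, Finset.sum_product, Finset.sum_mul_sum,
    signedMotzkin, sub_eq_add_neg]

open PowerSeries in
theorem stmt_12 :
    (PowerSeries.mk shadow : PowerSeries ℤ) =
      1 + X * PowerSeries.mk shadow - X ^ 2 * (PowerSeries.mk shadow) ^ 2 := by
  rw [funext shadow_eq_signedMotzkin]
  ext (_ | _ | n)
  · simp [signedMotzkin_zero]
  · simp [signedMotzkin_zero, signedMotzkin_one, coeff_X_pow_mul', coeff_one]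
  · rw [map_sub, map_add, coeff_succ_X_mul, coeff_X_pow_mul', if_pos (by omega), sq, coeff_mul]
    simp [signedMotzkin_add_two, coeff_one]
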